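/- Suppose λ(β) > 0. Then the set E = {x ∈ (0,1] : limsup_{n→∞} (−log_β |I_n(x)|)/n = 1 + λ(β)} is dense in [0,1]; i.e. the closure of E equals [0,1]. -/

import Mathlib

open MeasureTheory Filter Set

noncomputable section

/-- The β-transformation on `(0,1]`: `T_β x = βx − ⌈βx⌉ + 1`. -/
def Tbeta (β x : ℝ) : ℝ := β * x - ⌈β * x⌉ + 1

/-- The digits of the β-expansion, 0-indexed: `eps β x n` is the `(n+1)`-st digit
`ε_{n+1}(x,β) = ⌈β T_β^n x⌉ − 1`. -/
def eps (β x : ℝ) (n : ℕ) : ℤ := ⌈β * (Tbeta β)^[n] x⌉ - 1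

/-- The basic interval of order `n` containing `x`:
all `y ∈ (0,1]` whose first `n` digits agree with those of `x`. -/
def In (β x : ℝ) (n : ℕ) : Set ℝ := {y ∈ Ioc (0:ℝ) 1 | ∀ j < n, eps β y j = eps β x j}

/-- The length of a set (Lebesgue measure). -/
def len (s : Set ℝ) : ℝ := (volume s).toReal

/-- `tseq β n = t_n`: the maximal length of the block of zero digits of the
β-expansion of `1` immediately following position `n` (digits `ε*_{n+1},…,ε*_{n+k}`). -/
def tseq (β : ℝ) (n : ℕ) : ℕ := sSup {k : ℕ | ∀ j < k, eps β 1 (n + j) = 0}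

/-- `Gam β n = Γ_n = max_{1 ≤ k ≤ n} t_k`. -/
def Gam (β : ℝ) (n : ℕ) : ℕ := Finset.sup (Finset.Icc 1 n) (tseq β)

/-- `lam β = λ(β) = limsup_n Γ_n / n`. -/
def lam (β : ℝ) : ℝ := Filter.limsup (fun n : ℕ => (Gam β n : ℝ) / n) atTop

/-- `kstar β x n = k_n^*(x)`: the smallest `k ≥ 0` such that
`(ε_{k+1}(x),…,ε_n(x)) = (ε*_1,…,ε*_{n−k})`. -/
def kstar (β x : ℝ) (n : ℕ) : ℕ := sInf {k : ℕ | ∀ i < n - k, eps β x (k + i) = eps β 1 i}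

/-- `tau β x = τ(x) = limsup_n t_{n − k_n^*(x)} / n`. -/
def tau (β x : ℝ) : ℝ :=
  Filter.limsup (fun n : ℕ => (tseq β (n - kstar β x n) : ℝ) / n) atTop

/-- The upper density `\overline{D}(x) = limsup_n (−log_β |I_n(x)|)/n`. -/
def upperD (β x : ℝ) : ℝ :=
  Filter.limsup (fun n : ℕ => -Real.logb β (len (In β x n)) / n) atTop

/-- The lower density `\underline{D}(x) = liminf_n (−log_β |I_n(x)|)/n`. -/
def lowerD (β x : ℝ) : ℝ :=
  Filter.liminf (fun n : ℕ => -Real.logb β (len (In β x n)) / n) atTop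

/-- The basic interval (cylinder) associated to a finite word `w` of digits:
all `x ∈ (0,1]` whose β-expansion starts with `w`. -/
def cyl (β : ℝ) (w : List ℤ) : Set ℝ :=
  {x ∈ Ioc (0:ℝ) 1 | ∀ j < w.length, eps β x j = w.getD j 0}

/-- A finite word is admissible if it occurs as the initial digits of some `x ∈ (0,1]`. -/
def Admissible (β : ℝ) (w : List ℤ) : Prop := (cyl β w).Nonempty

/-- A basic interval is full if its length is `β^{−n}` where `n` is the order. -/
def IsFull (β : ℝ) (w : List ℤ) : Prop := len (cyl β w) = β ^ (-(w.length : ℤ))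

/-- The word `(ε*_1,…,ε*_n)` of the first `n` digits of the β-expansion of `1`. -/
def estarWord (β : ℝ) (n : ℕ) : List ℤ := (List.range n).map (eps β 1)

/-- The interior of a set relative to the subspace `[0,1]`
(for `S ⊆ [0,1]` this is exactly the interior of `S` in the topology of `[0,1]`). -/
def intIn01 (S : Set ℝ) : Set ℝ := Icc 0 1 \ closure (Icc 0 1 \ S)

/-!
Given `x ∈ (0,1]` and `N`, we build a point `y ∈ I_N(x)` digit by digit: the first `N` digits
of `x`, enough zeros to stay below `T^N x`, then blocks `ε*_1 ⋯ ε*_{M_i} 0^{t_{M_i}+1+E}` with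
`M_i` much larger than the preceding positions and `t_{M_i} ≥ (λ - 1/(i+1)) M_i`. Every tail of
this sequence lies in `(0,1]` (a block cannot exceed the expansion of `1`, and the `E` padding
zeros keep the tail after a block below `β⁻¹`), so it is the β-expansion of `y`.

Ending on `ε*_1 ⋯ ε*_M` at position `n` gives `|I_n(y)| ≤ β^{-(n + t_M)}`, which along the block
ends yields `limsup ≥ 1 + λ`. Conversely `|I_n(y)| ≥ β^{-(q+1)}` for the next nonzero digit
`q ≥ n`, and `q ≤ n + t_k + 1 + E` with `k ≤ n`, so `t_k ≤ (λ + ε) k + O(1)` gives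
`limsup ≤ 1 + λ`. As `|I_N(x)| ≤ β^{-N}`, such points are dense.
-/

section Transformation

variable {β : ℝ}

lemma Tbeta_mem_Ioc (β x : ℝ) : Tbeta β x ∈ Ioc (0:ℝ) 1 := by
  have := Int.ceil_lt_add_one (β * x)
  have := Int.le_ceil (β * x)
  constructor <;> simp only [Tbeta] <;> linarith

lemma iterate_Tbeta_mem_Ioc (β : ℝ) {x : ℝ} (hx : x ∈ Ioc (0:ℝ) 1) :
    ∀ n, (Tbeta β)^[n] x ∈ Ioc (0:ℝ) 1
  | 0 => hx
  | n + 1 => by rw [Function.iterate_succ_apply']; exact Tbeta_mem_Ioc β _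

lemma iterate_Tbeta_succ (x : ℝ) (n : ℕ) :
    (Tbeta β)^[n+1] x = β * (Tbeta β)^[n] x - eps β x n := by
  rw [Function.iterate_succ_apply', Tbeta, eps]; push_cast; ring

lemma eps_nonneg (hβ : 0 < β) {x : ℝ} (hx : x ∈ Ioc (0:ℝ) 1) (n : ℕ) : 0 ≤ eps β x n := by
  have := Int.ceil_pos.2 (mul_pos hβ (iterate_Tbeta_mem_Ioc β hx n).1)
  simp only [eps]; omega

lemma eps_lt (hβ : 0 ≤ β) {x : ℝ} (hx : x ∈ Ioc (0:ℝ) 1) (n : ℕ) : (eps β x n : ℝ) < β := by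
  have := mul_le_of_le_one_right hβ (iterate_Tbeta_mem_Ioc β hx n).2
  have := Int.ceil_lt_add_one (β * (Tbeta β)^[n] x)
  simp only [eps]; push_cast; linarith

lemma iterate_Tbeta_eq_sum_add (hβ : β ≠ 0) (x : ℝ) (m r : ℕ) :
    (Tbeta β)^[m] x = (∑ i ∈ Finset.range r, (eps β x (m+i) : ℝ) * (β⁻¹)^(i+1))
      + (β⁻¹)^r * (Tbeta β)^[m+r] x := by
  induction r with
  | zero => simp
  | succ r ih =>
    rw [Finset.sum_range_succ, ← add_assoc m, iterate_Tbeta_succ, ih]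
    have : (β⁻¹)^(r+1) * β = (β⁻¹)^r := by rw [pow_succ, mul_assoc, inv_mul_cancel₀ hβ, mul_one]
    linear_combination (-(Tbeta β)^[m+r] x) * this

lemma pow_inv_mul_iterate_le (hβ : 0 < β) {x : ℝ} (hx : x ∈ Ioc (0:ℝ) 1) (m r : ℕ) :
    (β⁻¹)^r * (Tbeta β)^[m+r] x ≤ (Tbeta β)^[m] x := by
  rw [iterate_Tbeta_eq_sum_add hβ.ne' x m r, le_add_iff_nonneg_left]
  refine Finset.sum_nonneg fun i _ => mul_nonneg ?_ (by positivity)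
  exact_mod_cast eps_nonneg hβ hx (m+i)

lemma ceil_mul_eq_of_eq_add {w s : ℝ} {d : ℤ} (h : β * w = d + s) (hs : s ∈ Ioc (0:ℝ) 1) :
    ⌈β * w⌉ = d + 1 := by
  rw [Int.ceil_eq_iff, h]; push_cast
  constructor <;> linarith [hs.1, hs.2]

lemma iterate_Tbeta_eq_of_expansion {w : ℕ → ℝ} {d : ℕ → ℤ} {n : ℕ}
    (hw : ∀ m < n, β * w m = d m + w (m+1) ∧ w (m+1) ∈ Ioc (0:ℝ) 1) :
    ∀ m ≤ n, (Tbeta β)^[m] (w 0) = w m := by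
  intro m
  induction m with
  | zero => simp
  | succ m ih =>
    intro hm
    obtain ⟨hmul, hmem⟩ := hw m hm
    rw [Function.iterate_succ_apply', ih (by omega), Tbeta, ceil_mul_eq_of_eq_add hmul hmem, hmul]
    push_cast; ring

lemma eps_eq_of_expansion {w : ℕ → ℝ} {d : ℕ → ℤ} {n : ℕ}
    (hw : ∀ m < n, β * w m = d m + w (m+1) ∧ w (m+1) ∈ Ioc (0:ℝ) 1) :
    ∀ m < n, eps β (w 0) m = d m := by
  intro m hm
  rw [eps, iterate_Tbeta_eq_of_expansion hw m hm.le, ceil_mul_eq_of_eq_add (hw m hm).1 (hw m hm).2]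
  ring

lemma inv_lt_iterate_of_eps_ne_zero (hβ : 0 < β) {x : ℝ} (hx : x ∈ Ioc (0:ℝ) 1) {m : ℕ}
    (h : eps β x m ≠ 0) : β⁻¹ < (Tbeta β)^[m] x := by
  by_contra! hle
  refine h (sub_eq_zero.2 (Int.ceil_eq_iff.2 ⟨?_, ?_⟩))
  · rw [Int.cast_one, sub_self]; exact mul_pos hβ (iterate_Tbeta_mem_Ioc β hx m).1
  · push_cast
    calc β * (Tbeta β)^[m] x ≤ β * β⁻¹ := by gcongr
    _ = 1 := mul_inv_cancel₀ hβ.ne'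

lemma iterate_add_eq_pow_mul_of_eps_eq_zero (x : ℝ) (m : ℕ) :
    ∀ k, (∀ j < k, eps β x (m+j) = 0) → (Tbeta β)^[m+k] x = β^k * (Tbeta β)^[m] x
  | 0, _ => by simp
  | k + 1, h => by
    rw [← add_assoc, iterate_Tbeta_succ, h k (by omega),
      iterate_add_eq_pow_mul_of_eps_eq_zero x m k fun j hj => h j (by omega)]
    push_cast; ring

lemma iterate_le_iterate_one_of_eps_eq (hβ : 0 ≤ β) {z : ℝ} (hz : z ∈ Ioc (0:ℝ) 1) (p : ℕ) :
    ∀ k, (∀ i < k, eps β z (p+i) = eps β 1 i) → (Tbeta β)^[p+k] z ≤ (Tbeta β)^[k] 1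
  | 0, _ => by simpa using (iterate_Tbeta_mem_Ioc β hz p).2
  | k + 1, h => by
    rw [← add_assoc, iterate_Tbeta_succ, iterate_Tbeta_succ, h k (by omega)]
    have := iterate_le_iterate_one_of_eps_eq hβ hz p k fun i hi => h i (by omega)
    gcongr

end Transformation

section BasicIntervals

variable {β : ℝ}

/-- The left endpoint of `I_n(z)`. -/
def cylLeft (β z : ℝ) (n : ℕ) : ℝ := ∑ i ∈ Finset.range n, (eps β z i : ℝ) * (β⁻¹)^(i+1)

lemma eq_cylLeft_add (hβ : β ≠ 0) (z : ℝ) (n : ℕ) :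
    z = cylLeft β z n + (β⁻¹)^n * (Tbeta β)^[n] z := by
  simpa [cylLeft] using iterate_Tbeta_eq_sum_add hβ z 0 n

lemma cylLeft_nonneg (hβ : 0 < β) {z : ℝ} (hz : z ∈ Ioc (0:ℝ) 1) (n : ℕ) : 0 ≤ cylLeft β z n :=
  Finset.sum_nonneg fun i _ => mul_nonneg (by exact_mod_cast eps_nonneg hβ hz i) (by positivity)

lemma cylLeft_congr {y z : ℝ} {n : ℕ} (hz : z ∈ In β y n) : cylLeft β z n = cylLeft β y n :=
  Finset.sum_congr rfl fun i hi => by rw [hz.2 i (Finset.mem_range.1 hi)]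

/-- Moving left from `y` by less than `β^{-n} T^n y` changes none of the first `n` digits:
the orbit is shifted by `β^m δ`, which stays below `T^m y`. -/
lemma Ioc_cylLeft_subset_In (hβ : 0 < β) {y : ℝ} (hy : y ∈ Ioc (0:ℝ) 1) (n : ℕ) :
    Ioc (cylLeft β y n) y ⊆ In β y n := by
  intro z hz
  have hyn := eq_cylLeft_add hβ.ne' y n
  set w : ℕ → ℝ := fun m => (Tbeta β)^[m] y - β^m * (y - z)
  have hw : ∀ m < n, β * w m = eps β y m + w (m+1) ∧ w (m+1) ∈ Ioc (0:ℝ) 1 := by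
    intro m hm
    refine ⟨by simp only [w]; rw [iterate_Tbeta_succ]; ring, ?_, ?_⟩
    · obtain ⟨k, hk⟩ := Nat.exists_eq_add_of_lt hm
      have hshift : β^(m+1) * (β⁻¹)^n * (Tbeta β)^[n] y ≤ (Tbeta β)^[m+1] y := by
        rw [hk, show m + k + 1 = (m+1) + k by ring, pow_add β⁻¹, ← mul_assoc (β^(m+1)), ← mul_pow,
          mul_inv_cancel₀ hβ.ne', one_pow, one_mul]
        exact pow_inv_mul_iterate_le hβ hy (m+1) k
      have : β^(m+1) * (y - z) < β^(m+1) * ((β⁻¹)^n * (Tbeta β)^[n] y) := by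
        gcongr; linarith [hz.1]
      simp only [w]; linarith
    · have : 0 ≤ β^(m+1) * (y - z) := mul_nonneg (by positivity) (by linarith [hz.2])
      simp only [w]; linarith [(iterate_Tbeta_mem_Ioc β hy (m+1)).2]
  have hw0 : w 0 = z := by simp [w]
  refine ⟨⟨(cylLeft_nonneg hβ hy n).trans_lt hz.1, hz.2.trans hy.2⟩, fun j hj => ?_⟩
  rw [← hw0, eps_eq_of_expansion hw j hj]

lemma In_subset_Ioc_cylLeft (hβ : 0 < β) {y c : ℝ} {n : ℕ}
    (hc : ∀ z ∈ In β y n, (Tbeta β)^[n] z ≤ c) :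
    In β y n ⊆ Ioc (cylLeft β y n) (cylLeft β y n + (β⁻¹)^n * c) := by
  intro z hz
  have hzn := eq_cylLeft_add hβ.ne' z n
  rw [cylLeft_congr hz] at hzn
  have hpos : 0 < (β⁻¹)^n * (Tbeta β)^[n] z :=
    mul_pos (by positivity) (iterate_Tbeta_mem_Ioc β hz.1 n).1
  have : (β⁻¹)^n * (Tbeta β)^[n] z ≤ (β⁻¹)^n * c := by gcongr; exact hc z hz
  constructor <;> linarith

lemma pow_inv_mul_iterate_le_len_In (hβ : 0 < β) {y : ℝ} (hy : y ∈ Ioc (0:ℝ) 1) (n : ℕ) :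
    (β⁻¹)^n * (Tbeta β)^[n] y ≤ len (In β y n) := by
  have hfin : volume (In β y n) ≠ ⊤ :=
    ne_top_of_le_ne_top (by simp) (measure_mono fun z hz => hz.1 : volume (In β y n) ≤ _)
  have hlen : y - cylLeft β y n = (β⁻¹)^n * (Tbeta β)^[n] y := by
    linarith [eq_cylLeft_add hβ.ne' y n]
  rw [len, ← ENNReal.ofReal_le_iff_le_toReal hfin, ← hlen, ← Real.volume_Ioc]
  exact measure_mono (Ioc_cylLeft_subset_In hβ hy n)

lemma len_In_le (hβ : 0 < β) {y c : ℝ} {n : ℕ} (hc0 : 0 ≤ c)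
    (hc : ∀ z ∈ In β y n, (Tbeta β)^[n] z ≤ c) :
    len (In β y n) ≤ (β⁻¹)^n * c := by
  have := measure_mono (μ := volume) (In_subset_Ioc_cylLeft hβ hc)
  rw [Real.volume_Ioc, add_sub_cancel_left] at this
  have h := ENNReal.toReal_mono ENNReal.ofReal_ne_top this
  rwa [ENNReal.toReal_ofReal (by positivity)] at h

lemma abs_sub_le_of_mem_In (hβ : 0 < β) {x y : ℝ} (hx : x ∈ Ioc (0:ℝ) 1) {N : ℕ}
    (hy : y ∈ In β x N) : |x - y| ≤ (β⁻¹)^N := by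
  have hsub := In_subset_Ioc_cylLeft (y := x) hβ fun z hz => (iterate_Tbeta_mem_Ioc β hz.1 N).2
  obtain ⟨hx1, hx2⟩ := hsub ⟨hx, fun _ _ => rfl⟩
  obtain ⟨hy1, hy2⟩ := hsub hy
  rw [abs_le]; constructor <;> linarith

lemma pow_inv_le_len_In (hβ : 0 < β) {y : ℝ} (hy : y ∈ Ioc (0:ℝ) 1) {n q : ℕ} (hnq : n ≤ q)
    (hq : 1 ≤ eps β y q) : (β⁻¹)^(q+1) ≤ len (In β y n) := by
  set r := q - n + 1
  have hterms : ∀ i ∈ Finset.range r, 0 ≤ (eps β y (n+i) : ℝ) * (β⁻¹)^(i+1) :=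
    fun i _ => mul_nonneg (by exact_mod_cast eps_nonneg hβ hy (n+i)) (by positivity)
  have hsingle := Finset.single_le_sum hterms (Finset.self_mem_range_succ (q - n))
  rw [Nat.add_sub_cancel' hnq] at hsingle
  have hrest : 0 ≤ (β⁻¹)^r * (Tbeta β)^[n+r] y :=
    mul_nonneg (by positivity) (iterate_Tbeta_mem_Ioc β hy (n+r)).1.le
  calc (β⁻¹)^(q+1) = (β⁻¹)^n * (β⁻¹)^r := by rw [← pow_add]; congr 1; omega
  _ ≤ (β⁻¹)^n * ((eps β y q : ℝ) * (β⁻¹)^r) := by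
      gcongr; exact le_mul_of_one_le_left (by positivity) (by exact_mod_cast hq)
  _ ≤ (β⁻¹)^n * (Tbeta β)^[n] y := by
      rw [iterate_Tbeta_eq_sum_add hβ.ne' y n r]; gcongr; linarith
  _ ≤ len (In β y n) := pow_inv_mul_iterate_le_len_In hβ hy n

end BasicIntervals

section ExpansionOfOne

variable {β : ℝ}

lemma one_mem_Ioc : (1:ℝ) ∈ Ioc (0:ℝ) 1 := right_mem_Ioc.2 one_pos

lemma one_le_eps_one_zero (hβ : 1 < β) : 1 ≤ eps β 1 0 := by
  have : (1:ℤ) < ⌈β * (Tbeta β)^[0] 1⌉ := Int.lt_ceil.2 (by simpa using hβ)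
  simp only [eps]; omega

/-- A run of `k` zero digits multiplies `T^n 1` by `β^k`, and `T^{n+k} 1 ≤ 1`. -/
lemma tseq_bddAbove (hβ : 1 < β) (n : ℕ) :
    BddAbove {k : ℕ | ∀ j < k, eps β 1 (n + j) = 0} := by
  have hT := (iterate_Tbeta_mem_Ioc β one_mem_Ioc n).1
  obtain ⟨k₀, hk₀⟩ := pow_unbounded_of_one_lt ((Tbeta β)^[n] 1)⁻¹ hβ
  refine ⟨k₀, fun k hk => ?_⟩
  by_contra! hlt
  have hrun := iterate_add_eq_pow_mul_of_eps_eq_zero 1 n k₀ fun j hj => hk j (hj.trans hlt)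
  have := (iterate_Tbeta_mem_Ioc β one_mem_Ioc (n + k₀)).2
  rw [inv_lt_iff_one_lt_mul₀ hT] at hk₀
  linarith

lemma eps_one_eq_zero_of_lt_tseq (hβ : 1 < β) {n j : ℕ} (hj : j < tseq β n) :
    eps β 1 (n + j) = 0 :=
  Nat.sSup_mem ⟨0, by simp⟩ (tseq_bddAbove hβ n) j hj

lemma le_tseq (hβ : 1 < β) {n k : ℕ} (h : ∀ j < k, eps β 1 (n + j) = 0) : k ≤ tseq β n :=
  le_csSup (tseq_bddAbove hβ n) h

lemma eps_one_tseq_ne_zero (hβ : 1 < β) (n : ℕ) : eps β 1 (n + tseq β n) ≠ 0 := fun h =>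
  (le_tseq hβ (k := tseq β n + 1) fun j hj => by
    rcases Nat.lt_succ_iff_lt_or_eq.1 hj with hj | rfl
    exacts [eps_one_eq_zero_of_lt_tseq hβ hj, h]).not_gt (Nat.lt_succ_self _)

lemma iterate_one_le_pow_tseq (hβ : 1 < β) (n : ℕ) : (Tbeta β)^[n] 1 ≤ (β⁻¹)^(tseq β n) := by
  have hrun := iterate_add_eq_pow_mul_of_eps_eq_zero 1 n (tseq β n)
    fun j hj => eps_one_eq_zero_of_lt_tseq hβ hj
  have := (iterate_Tbeta_mem_Ioc β one_mem_Ioc (n + tseq β n)).2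
  rw [hrun, mul_comm] at this
  rw [inv_pow, ← one_div, le_div_iff₀ (by positivity)]
  exact this

lemma len_In_le_of_eps_eq_eps_one (hβ : 1 < β) {y : ℝ} {p k : ℕ}
    (h : ∀ i < k, eps β y (p+i) = eps β 1 i) :
    len (In β y (p+k)) ≤ (β⁻¹)^(p + k + tseq β k) := by
  have hβ0 : 0 < β := zero_lt_one.trans hβ
  have hc : ∀ z ∈ In β y (p+k), (Tbeta β)^[p+k] z ≤ (Tbeta β)^[k] 1 := fun z hz =>
    iterate_le_iterate_one_of_eps_eq hβ0.le hz.1 p k fun i hi => by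
      rw [hz.2 (p+i) (by omega), h i hi]
  calc len (In β y (p+k)) ≤ (β⁻¹)^(p+k) * (Tbeta β)^[k] 1 :=
        len_In_le hβ0 (iterate_Tbeta_mem_Ioc β one_mem_Ioc k).1.le hc
  _ ≤ (β⁻¹)^(p+k) * (β⁻¹)^(tseq β k) := by gcongr; exact iterate_one_le_pow_tseq hβ k
  _ = (β⁻¹)^(p + k + tseq β k) := by rw [← pow_add]

lemma neg_logb_pow_inv (hβ : 1 < β) (m : ℕ) : -Real.logb β ((β⁻¹)^m) = m := by
  rw [inv_pow, Real.logb_inv, neg_neg, Real.logb_pow, Real.logb_self_eq_one hβ, mul_one]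

lemma neg_logb_len_In_le (hβ : 1 < β) {y : ℝ} (hy : y ∈ Ioc (0:ℝ) 1) {n q : ℕ} (hnq : n ≤ q)
    (hq : 1 ≤ eps β y q) : -Real.logb β (len (In β y n)) ≤ q + 1 := by
  have h := pow_inv_le_len_In (zero_lt_one.trans hβ) hy hnq hq
  have := Real.logb_le_logb_of_le hβ (by positivity) h
  rw [← Nat.cast_add_one, ← neg_logb_pow_inv hβ]
  linarith

lemma le_neg_logb_len_In (hβ : 1 < β) {y : ℝ} (hy : y ∈ Ioc (0:ℝ) 1) {p k : ℕ}
    (h : ∀ i < k, eps β y (p+i) = eps β 1 i) :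
    ((p + k : ℕ) : ℝ) + tseq β k ≤ -Real.logb β (len (In β y (p+k))) := by
  have hpos : 0 < len (In β y (p+k)) :=
    lt_of_lt_of_le (mul_pos (by positivity) (iterate_Tbeta_mem_Ioc β hy (p+k)).1)
      (pow_inv_mul_iterate_le_len_In (zero_lt_one.trans hβ) hy (p+k))
  have := Real.logb_le_logb_of_le hβ hpos (len_In_le_of_eps_eq_eps_one hβ h)
  rw [← Nat.cast_add, ← neg_logb_pow_inv hβ]
  linarith

end ExpansionOfOne

lemma limsup_eq_of_eventually_le_of_frequently_ge {α : Type*} {f : Filter α} {u : α → ℝ} {c : ℝ}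
    (hle : ∀ ε > 0, ∀ᶠ n in f, u n ≤ c + ε) (hge : ∀ ε > 0, ∃ᶠ n in f, c - ε ≤ u n) :
    limsup u f = c := by
  have hbdd : f.IsBoundedUnder (· ≤ ·) u := isBoundedUnder_of_eventually_le (hle 1 one_pos)
  have hcobdd : f.IsCoboundedUnder (· ≤ ·) u := .of_frequently_ge (hge 1 one_pos)
  refine le_antisymm (le_of_forall_pos_le_add fun ε hε => limsup_le_of_le hcobdd (hle ε hε))
    (le_of_forall_pos_le_add fun ε hε => ?_)
  linarith [le_limsup_of_frequently_le (hge ε hε) hbdd]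

section GrowthOfZeroRuns

variable {β : ℝ}

lemma tseq_le_Gam {k : ℕ} (hk : 1 ≤ k) : tseq β k ≤ Gam β k :=
  Finset.le_sup (Finset.mem_Icc.2 ⟨hk, le_rfl⟩)

/-- `λ(β) > 0` rules out the junk value `limsup = 0` of an unbounded sequence. -/
lemma isBoundedUnder_Gam_div (hlam : 0 < lam β) :
    atTop.IsBoundedUnder (· ≤ ·) fun n : ℕ => (Gam β n : ℝ) / n := by
  by_contra h
  exact hlam.ne' (Real.limsup_of_not_isBoundedUnder h)

lemma exists_tseq_le (hlam : 0 < lam β) {ε : ℝ} (hε : 0 < ε) :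
    ∃ C : ℝ, ∀ k, (tseq β k : ℝ) ≤ (lam β + ε) * k + C := by
  obtain ⟨R, hR⟩ := eventually_atTop.1
    (eventually_lt_of_limsup_lt (lt_add_of_pos_right (lam β) hε) (isBoundedUnder_Gam_div hlam))
  set C : ℕ := (Finset.range (R + 1)).sup (tseq β)
  refine ⟨C, fun k => ?_⟩
  have hlam' : 0 ≤ (lam β + ε) * k := by positivity
  rcases lt_or_ge k (R + 1) with hk | hk
  · have : tseq β k ≤ C := Finset.le_sup (Finset.mem_range.2 hk)
    have : (tseq β k : ℝ) ≤ C := by exact_mod_cast this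
    linarith
  · have hk0 : (0:ℝ) < k := by exact_mod_cast (by omega : 0 < k)
    have h1 := hR k (by omega)
    rw [div_lt_iff₀ hk0] at h1
    have : (tseq β k : ℝ) ≤ Gam β k := by exact_mod_cast tseq_le_Gam (by omega)
    have : (0:ℝ) ≤ C := Nat.cast_nonneg _
    linarith

/-- `Γ_n / n > λ - ε` infinitely often, and `Γ_n = t_k` for some `k ≤ n`; once `Γ_n` exceeds
`t_1, …, t_M`, that `k` lies beyond `M`. -/
lemma exists_tseq_ge (M : ℕ) {ε : ℝ} (hε : 0 < ε) :
    ∃ m ≥ M, (lam β - ε) * m ≤ tseq β m := by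
  rcases le_or_gt (lam β - ε) 0 with hneg | hpos
  · exact ⟨M, le_rfl, (mul_nonpos_of_nonpos_of_nonneg hneg (Nat.cast_nonneg M)).trans
      (Nat.cast_nonneg _)⟩
  set C : ℕ := (Finset.range (M + 1)).sup (tseq β)
  have hfreq := frequently_lt_of_lt_limsup
    (isCoboundedUnder_le_of_le atTop fun n : ℕ => by positivity) (sub_lt_self (lam β) hε)
  obtain ⟨n₀, hn₀⟩ := exists_nat_gt ((C : ℝ) / (lam β - ε))
  obtain ⟨n, hn, hGam⟩ := frequently_atTop.1 hfreq (max n₀ 1)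
  have hn1 : 1 ≤ n := le_of_max_le_right hn
  have hn0 : (0:ℝ) < n := by exact_mod_cast hn1
  rw [lt_div_iff₀ hn0] at hGam
  obtain ⟨k, hk, hkGam⟩ :=
    Finset.exists_mem_eq_sup (Finset.Icc 1 n) ⟨1, Finset.mem_Icc.2 ⟨le_rfl, hn1⟩⟩ (tseq β)
  rw [Finset.mem_Icc] at hk
  have hCn : (C : ℝ) < (lam β - ε) * n := by
    rw [div_lt_iff₀ hpos] at hn₀
    have : (n₀ : ℝ) ≤ n := by exact_mod_cast le_of_max_le_left hn
    nlinarith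
  have hGk : (Gam β n : ℝ) = tseq β k := by rw [Gam, hkGam]
  refine ⟨k, ?_, ?_⟩
  · by_contra! hkM
    have : tseq β k ≤ C := Finset.le_sup (Finset.mem_range.2 (by omega))
    have : (tseq β k : ℝ) ≤ C := by exact_mod_cast this
    linarith
  · have : (k : ℝ) ≤ n := by exact_mod_cast hk.2
    nlinarith

end GrowthOfZeroRuns

section TailValue

variable {β : ℝ} {d : ℕ → ℤ}

def tailValue (β : ℝ) (d : ℕ → ℤ) (n : ℕ) : ℝ := ∑' i : ℕ, (d (n+i) : ℝ) * (β⁻¹)^(i+1)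

lemma tailValue_term_nonneg (hβ : 0 < β) (hd0 : ∀ n, 0 ≤ d n) (n i : ℕ) :
    0 ≤ (d (n+i) : ℝ) * (β⁻¹)^(i+1) :=
  mul_nonneg (by exact_mod_cast hd0 (n+i)) (by positivity)

lemma tailValue_term_le (hβ : 0 < β) (hdβ : ∀ n, (d n : ℝ) ≤ β) (n i : ℕ) :
    (d (n+i) : ℝ) * (β⁻¹)^(i+1) ≤ (β⁻¹)^i :=
  calc (d (n+i) : ℝ) * (β⁻¹)^(i+1) ≤ β * (β⁻¹)^(i+1) := by gcongr; exact hdβ (n+i)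
  _ = (β⁻¹)^i := by rw [pow_succ, mul_left_comm, mul_inv_cancel₀ hβ.ne', mul_one]

lemma summable_tailValue (hβ : 1 < β) (hd0 : ∀ n, 0 ≤ d n) (hdβ : ∀ n, (d n : ℝ) ≤ β) (n : ℕ) :
    Summable fun i : ℕ => (d (n+i) : ℝ) * (β⁻¹)^(i+1) :=
  have hβ0 : 0 < β := zero_lt_one.trans hβ
  (summable_geometric_of_lt_one (by positivity) (inv_lt_one_of_one_lt₀ hβ)).of_nonneg_of_le
    (tailValue_term_nonneg hβ0 hd0 n) (tailValue_term_le hβ0 hdβ n)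

lemma mul_tailValue (hβ : 1 < β) (hd0 : ∀ n, 0 ≤ d n) (hdβ : ∀ n, (d n : ℝ) ≤ β) (n : ℕ) :
    β * tailValue β d n = d n + tailValue β d (n+1) := by
  have hβ0 : β ≠ 0 := (zero_lt_one.trans hβ).ne'
  rw [tailValue, (summable_tailValue hβ hd0 hdβ n).tsum_eq_zero_add, mul_add, ← tsum_mul_left,
    tailValue]
  congr 1
  · rw [add_zero, zero_add, pow_one, mul_left_comm, mul_inv_cancel₀ hβ0, mul_one]
  · refine tsum_congr fun i => ?_
    rw [show n + (i+1) = n + 1 + i by ring, pow_succ _ (i+1), mul_left_comm β, ← mul_assoc β,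
      mul_comm β, mul_assoc _ β, mul_inv_cancel₀ hβ0, mul_one]

lemma tailValue_eq_sum_add (hβ : 1 < β) (hd0 : ∀ n, 0 ≤ d n) (hdβ : ∀ n, (d n : ℝ) ≤ β)
    (n r : ℕ) : tailValue β d n =
      (∑ i ∈ Finset.range r, (d (n+i) : ℝ) * (β⁻¹)^(i+1)) + (β⁻¹)^r * tailValue β d (n+r) := by
  induction r with
  | zero => simp
  | succ r ih =>
    have h := mul_tailValue hβ hd0 hdβ (n+r)
    have : (β⁻¹)^(r+1) * β = (β⁻¹)^r := by
      rw [pow_succ, mul_assoc, inv_mul_cancel₀ (zero_lt_one.trans hβ).ne', mul_one]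
    rw [Finset.sum_range_succ, ih, ← add_assoc n]
    linear_combination (β⁻¹)^(r+1) * h - tailValue β d (n + r) * this

lemma tailValue_nonneg (hβ : 0 < β) (hd0 : ∀ n, 0 ≤ d n) (n : ℕ) : 0 ≤ tailValue β d n :=
  tsum_nonneg (tailValue_term_nonneg hβ hd0 n)

lemma tailValue_le (hβ : 1 < β) (hd0 : ∀ n, 0 ≤ d n) (hdβ : ∀ n, (d n : ℝ) ≤ β) (n : ℕ) :
    tailValue β d n ≤ (1 - β⁻¹)⁻¹ := by
  have hβ0 : 0 < β := zero_lt_one.trans hβ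
  rw [← tsum_geometric_of_lt_one (by positivity) (inv_lt_one_of_one_lt₀ hβ)]
  exact (summable_tailValue hβ hd0 hdβ n).tsum_le_tsum (tailValue_term_le hβ0 hdβ n)
    (summable_geometric_of_lt_one (by positivity) (inv_lt_one_of_one_lt₀ hβ))

lemma le_tailValue (hβ : 1 < β) (hd0 : ∀ n, 0 ≤ d n) (hdβ : ∀ n, (d n : ℝ) ≤ β)
    {n q : ℕ} (hq : n ≤ q) : (d q : ℝ) * (β⁻¹)^(q-n+1) ≤ tailValue β d n := by
  have := (summable_tailValue hβ hd0 hdβ n).le_tsum (q - n)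
    fun j _ => tailValue_term_nonneg (zero_lt_one.trans hβ) hd0 n j
  rwa [Nat.add_sub_cancel' hq] at this

lemma tailValue_eq_of_eq_zero (hβ : 1 < β) (hd0 : ∀ n, 0 ≤ d n) (hdβ : ∀ n, (d n : ℝ) ≤ β)
    {n r : ℕ} (hz : ∀ j < r, d (n + j) = 0) :
    tailValue β d n = (β⁻¹)^r * tailValue β d (n + r) := by
  rw [tailValue_eq_sum_add hβ hd0 hdβ n r, Finset.sum_eq_zero fun i hi => by
    rw [hz i (Finset.mem_range.1 hi), Int.cast_zero, zero_mul], zero_add]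

lemma tailValue_le_iterate_of_eq (hβ : 1 < β) (hd0 : ∀ n, 0 ≤ d n) (hdβ : ∀ n, (d n : ℝ) ≤ β)
    {ξ : ℝ} {n j r : ℕ} (h : ∀ i < r, d (n+i) = eps β ξ (j+i))
    (hend : tailValue β d (n+r) ≤ (Tbeta β)^[j+r] ξ) :
    tailValue β d n ≤ (Tbeta β)^[j] ξ := by
  rw [tailValue_eq_sum_add hβ hd0 hdβ n r, iterate_Tbeta_eq_sum_add (zero_lt_one.trans hβ).ne',
    Finset.sum_congr rfl fun i hi => by rw [h i (Finset.mem_range.1 hi)]]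
  gcongr

lemma eps_tailValue (hβ : 1 < β) (hd0 : ∀ n, 0 ≤ d n) (hdβ : ∀ n, (d n : ℝ) ≤ β)
    (htl : ∀ n, tailValue β d n ∈ Ioc (0:ℝ) 1) (n : ℕ) : eps β (tailValue β d 0) n = d n :=
  eps_eq_of_expansion (n := n + 1) (fun m _ => ⟨mul_tailValue hβ hd0 hdβ m, htl (m+1)⟩) n
    (Nat.lt_succ_self n)

end TailValue

lemma sub_div_le_div_add_of_mul_lt {lam : ℝ} {i L M t : ℕ} (hM : (i+1) * L < M)
    (ht : (lam - 1/(i+1)) * M ≤ t) : lam - (lam + 1)/(i+2) ≤ (t : ℝ) / (L + M) := by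
  have hM0 : 0 < M := by omega
  have hLM : (0:ℝ) < L + M := by positivity
  have hM' : ((i:ℝ)+1) * (L + M) ≤ (i+2) * M := by
    have : ((i:ℝ)+1) * L ≤ M := by exact_mod_cast hM.le
    linarith
  rw [le_div_iff₀ hLM]
  rcases le_or_gt (lam - (lam + 1)/(i+2)) 0 with hc | hc
  · nlinarith [(Nat.cast_nonneg t : (0:ℝ) ≤ t)]
  have hcoef : (lam - (lam + 1)/(i+2)) * (i+2) = (lam - 1/(i+1)) * (i+1) := by
    field_simp; ring
  have : (lam - (lam + 1)/(i+2)) * (L + M) * (i+1) ≤ t * (i+1) :=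
    calc (lam - (lam + 1)/(i+2)) * (L + M) * (i+1)
        = (lam - (lam + 1)/(i+2)) * ((i+1) * (L + M)) := by ring
    _ ≤ (lam - (lam + 1)/(i+2)) * ((i+2) * M) := by gcongr
    _ = (lam - 1/(i+1)) * M * (i+1) := by linear_combination (M:ℝ) * hcoef
    _ ≤ t * (i+1) := by gcongr
  exact le_of_mul_le_mul_right this (by positivity)

/-- Block `i` occupies the positions `[L i, L (i+1))`: the digits `ε*_1,…,ε*_{M i}`
followed by `t_{M i} + 1 + gap` zeros. -/
structure BlockSchedule (β : ℝ) where
  L : ℕ → ℕ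
  M : ℕ → ℕ
  gap : ℕ
  M_pos : ∀ i, 0 < M i
  L_succ : ∀ i, L (i+1) = L i + M i + tseq β (M i) + 1 + gap
  gap_large : (1 - β⁻¹)⁻¹ ≤ β ^ gap

namespace BlockSchedule

variable {β : ℝ} (S : BlockSchedule β)

lemma L_strictMono : StrictMono S.L :=
  strictMono_nat_of_lt_succ fun i => by rw [S.L_succ]; omega

lemma L_zero_add_le (i : ℕ) : S.L 0 + i ≤ S.L i := by
  induction i with
  | zero => rfl
  | succ i ih => have := S.L_strictMono i.lt_add_one; omega

/-- The index of the block containing position `n`, for `n ≥ L 0`. -/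
def block (n : ℕ) : ℕ := Nat.findGreatest (fun i => S.L i ≤ n) n

lemma block_eq {i n : ℕ} (h₁ : S.L i ≤ n) (h₂ : n < S.L (i+1)) : S.block n = i := by
  refine Nat.findGreatest_eq_iff.2 ⟨by linarith [S.L_zero_add_le i], fun _ => h₁, fun j hj _ => ?_⟩
  have := S.L_strictMono.monotone (show i + 1 ≤ j from hj)
  omega

lemma exists_eq_L_add {n : ℕ} (hn : S.L 0 ≤ n) :
    ∃ i r, n = S.L i + r ∧ r < S.M i + tseq β (S.M i) + 1 + S.gap := by
  set i := S.block n
  have hi : S.L i ≤ n := Nat.findGreatest_spec (P := fun j => S.L j ≤ n) (Nat.zero_le n) hn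
  have hlt : n < S.L (i+1) := by
    by_contra! hle
    exact Nat.findGreatest_is_greatest (Nat.lt_succ_self i)
      (by linarith [S.L_zero_add_le (i+1)]) hle
  refine ⟨i, n - S.L i, by omega, ?_⟩
  rw [S.L_succ] at hlt
  omega

def digits (x : ℝ) (N n : ℕ) : ℤ :=
  if n < N then eps β x n
  else if n < S.L 0 then 0
  else if n - S.L (S.block n) < S.M (S.block n) then eps β 1 (n - S.L (S.block n)) else 0

variable {x : ℝ} {N : ℕ}

lemma digits_of_lt {n : ℕ} (hn : n < N) : S.digits x N n = eps β x n := if_pos hn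

lemma digits_of_lt_L_zero {n : ℕ} (hNn : N ≤ n) (hn : n < S.L 0) : S.digits x N n = 0 := by
  rw [digits, if_neg (by omega), if_pos hn]

lemma digits_L_add (hN : N ≤ S.L 0) {i r : ℕ} (hr : r < S.M i) :
    S.digits x N (S.L i + r) = eps β 1 r := by
  have hL := S.L_strictMono.monotone (Nat.zero_le i)
  have hblock : S.block (S.L i + r) = i :=
    S.block_eq (by omega) (by rw [S.L_succ]; omega)
  rw [digits, if_neg (by omega), if_neg (by omega), hblock, if_pos (by omega),
    Nat.add_sub_cancel_left]

lemma digits_L_add_eq_zero (hN : N ≤ S.L 0) {i s : ℕ} (hs₁ : S.M i ≤ s)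
    (hs₂ : s < S.M i + tseq β (S.M i) + 1 + S.gap) : S.digits x N (S.L i + s) = 0 := by
  have hL := S.L_strictMono.monotone (Nat.zero_le i)
  have hblock : S.block (S.L i + s) = i :=
    S.block_eq (by omega) (by rw [S.L_succ]; omega)
  rw [digits, if_neg (by omega), if_neg (by omega), hblock, if_neg (by omega)]

lemma digits_nonneg (hβ : 0 < β) (hx : x ∈ Ioc (0:ℝ) 1) (n : ℕ) : 0 ≤ S.digits x N n := by
  unfold digits
  split_ifs
  exacts [eps_nonneg hβ hx n, le_rfl, eps_nonneg hβ one_mem_Ioc _, le_rfl]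

lemma digits_le (hβ : 0 < β) (hx : x ∈ Ioc (0:ℝ) 1) (n : ℕ) : (S.digits x N n : ℝ) ≤ β := by
  unfold digits
  split_ifs
  exacts [(eps_lt hβ.le hx n).le, by simpa using hβ.le, (eps_lt hβ.le one_mem_Ioc _).le,
    by simpa using hβ.le]

lemma tailValue_digits_pos (hβ : 1 < β) (hx : x ∈ Ioc (0:ℝ) 1) (hN : N ≤ S.L 0) (n : ℕ) :
    0 < tailValue β (S.digits x N) n := by
  have hβ0 : 0 < β := zero_lt_one.trans hβ
  have h := le_tailValue hβ (S.digits_nonneg (N := N) hβ0 hx) (S.digits_le hβ0 hx)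
    (le_trans (Nat.le_add_left n _) (S.L_zero_add_le n))
  have hd : S.digits x N (S.L n) = eps β 1 0 := by simpa using S.digits_L_add hN (S.M_pos n)
  have : (1:ℝ) ≤ S.digits x N (S.L n) := by exact_mod_cast hd ▸ one_le_eps_one_zero hβ
  have : 0 < (β⁻¹)^(S.L n - n + 1) := by positivity
  nlinarith

/-- The `1 + gap` zeros closing a block push its tail below `β⁻¹ < T^{M+t_M} 1`. -/
lemma tailValue_digits_block_end_le (hβ : 1 < β) (hx : x ∈ Ioc (0:ℝ) 1) (hN : N ≤ S.L 0)
    (i : ℕ) : tailValue β (S.digits x N) (S.L i + (S.M i + tseq β (S.M i))) ≤ β⁻¹ := by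
  have hβ0 : 0 < β := zero_lt_one.trans hβ
  have hd0 := S.digits_nonneg (N := N) hβ0 hx
  have hdβ := S.digits_le (N := N) hβ0 hx
  rw [tailValue_eq_of_eq_zero hβ hd0 hdβ (r := 1 + S.gap) fun j hj => by
      rw [add_assoc]; exact S.digits_L_add_eq_zero hN (by omega) (by omega),
    show S.L i + (S.M i + tseq β (S.M i)) + (1 + S.gap) = S.L (i+1) by rw [S.L_succ]; ring]
  calc (β⁻¹)^(1 + S.gap) * tailValue β (S.digits x N) (S.L (i+1))
      ≤ (β⁻¹)^(1 + S.gap) * β^S.gap := by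
        gcongr; exact (tailValue_le hβ hd0 hdβ _).trans S.gap_large
  _ = β⁻¹ := by rw [pow_add, pow_one, mul_assoc, ← mul_pow, inv_mul_cancel₀ hβ0.ne', one_pow,
      mul_one]

lemma tailValue_digits_L_add_le (hβ : 1 < β) (hx : x ∈ Ioc (0:ℝ) 1) (hN : N ≤ S.L 0)
    {i r : ℕ} (hr : r ≤ S.M i + tseq β (S.M i)) :
    tailValue β (S.digits x N) (S.L i + r) ≤ (Tbeta β)^[r] 1 := by
  have hβ0 : 0 < β := zero_lt_one.trans hβ
  refine tailValue_le_iterate_of_eq hβ (S.digits_nonneg hβ0 hx) (S.digits_le hβ0 hx)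
    (r := S.M i + tseq β (S.M i) - r) (fun s hs => ?_) ?_
  · rw [add_assoc]
    rcases lt_or_ge (r + s) (S.M i) with h | h
    · exact S.digits_L_add hN h
    · rw [S.digits_L_add_eq_zero hN h (by omega), ← Nat.add_sub_cancel' h,
        eps_one_eq_zero_of_lt_tseq hβ (by omega)]
  · rw [add_assoc, Nat.add_sub_cancel' hr]
    exact (S.tailValue_digits_block_end_le hβ hx hN i).trans
      (inv_lt_iterate_of_eps_ne_zero hβ0 one_mem_Ioc (eps_one_tseq_ne_zero hβ _)).le

lemma tailValue_digits_le_one (hβ : 1 < β) (hx : x ∈ Ioc (0:ℝ) 1) (hN : N ≤ S.L 0)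
    (hK : (β⁻¹)^(S.L 0 - N) ≤ (Tbeta β)^[N] x) (n : ℕ) :
    tailValue β (S.digits x N) n ≤ 1 := by
  have hβ0 : 0 < β := zero_lt_one.trans hβ
  have hd0 := S.digits_nonneg (N := N) hβ0 hx
  have hdβ := S.digits_le (N := N) hβ0 hx
  have hL : ∀ i, tailValue β (S.digits x N) (S.L i) ≤ 1 := fun i => by
    simpa using S.tailValue_digits_L_add_le hβ hx hN (i := i) (r := 0) (Nat.zero_le _)
  have hzeros : ∀ {n m : ℕ}, n ≤ m → (∀ j < m - n, S.digits x N (n + j) = 0) →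
      tailValue β (S.digits x N) m ≤ 1 → tailValue β (S.digits x N) n ≤ 1 := by
    intro n m hnm hz hm
    rw [tailValue_eq_of_eq_zero hβ hd0 hdβ hz, Nat.add_sub_cancel' hnm]
    exact mul_le_one₀ (pow_le_one₀ (by positivity) (inv_le_one_of_one_le₀ hβ.le))
      (tailValue_nonneg hβ0 hd0 _) hm
  rcases lt_or_ge n (S.L 0) with hn | hn
  · have hNtail : tailValue β (S.digits x N) N ≤ (Tbeta β)^[N] x := by
      rw [tailValue_eq_of_eq_zero hβ hd0 hdβ (r := S.L 0 - N) fun j hj =>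
        S.digits_of_lt_L_zero (by omega) (by omega), Nat.add_sub_cancel' hN]
      exact le_trans (mul_le_of_le_one_right (by positivity) (hL 0)) hK
    rcases lt_or_ge n N with hnN | hnN
    · refine (tailValue_le_iterate_of_eq hβ hd0 hdβ (r := N - n) (fun i hi => ?_) ?_).trans
        (iterate_Tbeta_mem_Ioc β hx n).2
      · exact S.digits_of_lt (by omega)
      · rwa [Nat.add_sub_cancel' hnN.le]
    · exact hzeros hn.le (fun j hj => S.digits_of_lt_L_zero (by omega) (by omega)) (hL 0)
  · obtain ⟨i, r, rfl, hr⟩ := S.exists_eq_L_add hn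
    rcases le_or_gt r (S.M i + tseq β (S.M i)) with hr' | hr'
    · exact (S.tailValue_digits_L_add_le hβ hx hN hr').trans
        (iterate_Tbeta_mem_Ioc β one_mem_Ioc r).2
    · refine hzeros (m := S.L (i+1)) (by rw [S.L_succ]; omega) (fun j hj => ?_) (hL (i+1))
      rw [S.L_succ] at hj
      rw [add_assoc]
      exact S.digits_L_add_eq_zero hN (by omega) (by omega)

def point (x : ℝ) (N : ℕ) : ℝ := tailValue β (S.digits x N) 0

lemma eps_point (hβ : 1 < β) (hx : x ∈ Ioc (0:ℝ) 1) (hN : N ≤ S.L 0)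
    (hK : (β⁻¹)^(S.L 0 - N) ≤ (Tbeta β)^[N] x) (n : ℕ) :
    eps β (S.point x N) n = S.digits x N n :=
  have hβ0 : 0 < β := zero_lt_one.trans hβ
  eps_tailValue hβ (S.digits_nonneg hβ0 hx) (S.digits_le hβ0 hx)
    (fun n => ⟨S.tailValue_digits_pos hβ hx hN n, S.tailValue_digits_le_one hβ hx hN hK n⟩) n

lemma point_mem_In (hβ : 1 < β) (hx : x ∈ Ioc (0:ℝ) 1) (hN : N ≤ S.L 0)
    (hK : (β⁻¹)^(S.L 0 - N) ≤ (Tbeta β)^[N] x) : S.point x N ∈ In β x N :=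
  ⟨⟨S.tailValue_digits_pos hβ hx hN 0, S.tailValue_digits_le_one hβ hx hN hK 0⟩,
    fun j hj => by rw [S.eps_point hβ hx hN hK, S.digits_of_lt hj]⟩

lemma exists_one_le_digits (hβ : 1 < β) (hN : N ≤ S.L 0) {n : ℕ} (hn : S.L 0 ≤ n) :
    ∃ q k, n ≤ q ∧ k ≤ n ∧ 1 ≤ S.digits x N q ∧ q ≤ n + tseq β k + 1 + S.gap := by
  obtain ⟨i, r, rfl, hr⟩ := S.exists_eq_L_add hn
  have hnext : 1 ≤ S.digits x N (S.L (i+1)) := by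
    simpa using S.digits_L_add hN (S.M_pos (i+1)) ▸ one_le_eps_one_zero hβ
  have hLi : S.L (i+1) = S.L i + S.M i + tseq β (S.M i) + 1 + S.gap := S.L_succ i
  rcases lt_or_ge r (S.M i) with hrM | hrM
  · rcases lt_or_ge (r + tseq β r) (S.M i) with hrt | hrt
    · refine ⟨S.L i + (r + tseq β r), r, by omega, by omega, ?_, by omega⟩
      rw [S.digits_L_add hN hrt]
      have := eps_one_tseq_ne_zero hβ r
      have := eps_nonneg (zero_lt_one.trans hβ) one_mem_Ioc (r + tseq β r)
      omega
    · refine ⟨S.L (i+1), r, by omega, by omega, hnext, ?_⟩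
      have : S.M i - r + tseq β (S.M i) ≤ tseq β r := le_tseq hβ fun j hj => by
        rcases lt_or_ge j (S.M i - r) with hj' | hj'
        · exact eps_one_eq_zero_of_lt_tseq hβ (by omega)
        · rw [show r + j = S.M i + (j - (S.M i - r)) by omega]
          exact eps_one_eq_zero_of_lt_tseq hβ (by omega)
      omega
  · exact ⟨S.L (i+1), S.M i, by omega, by omega, hnext, by omega⟩

lemma eventually_neg_logb_len_In_point_div_le (hβ : 1 < β) (hlam : 0 < lam β)
    (hx : x ∈ Ioc (0:ℝ) 1) (hN : N ≤ S.L 0) (hK : (β⁻¹)^(S.L 0 - N) ≤ (Tbeta β)^[N] x)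
    {ε : ℝ} (hε : 0 < ε) :
    ∀ᶠ n : ℕ in atTop, -Real.logb β (len (In β (S.point x N) n)) / n ≤ 1 + lam β + ε := by
  obtain ⟨C, hC⟩ := exists_tseq_le hlam (half_pos hε)
  have hsmall := (tendsto_order.1 (tendsto_const_div_atTop_nhds_zero_nat (C + 2 + S.gap))).2
    (ε / 2) (half_pos hε)
  filter_upwards [eventually_ge_atTop (max (S.L 0) 1), hsmall] with n hn hsmall
  have hn0 : (0:ℝ) < n := by exact_mod_cast (le_of_max_le_right hn : 1 ≤ n)
  obtain ⟨q, k, hnq, hkn, hq, hqn⟩ := S.exists_one_le_digits (x := x) hβ hN (le_of_max_le_left hn)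
  have hlog := neg_logb_len_In_le hβ (S.point_mem_In hβ hx hN hK).1 hnq
    (by rwa [S.eps_point hβ hx hN hK])
  have hqn' : (q : ℝ) ≤ n + tseq β k + 1 + S.gap := by exact_mod_cast hqn
  have hkn' : (lam β + ε / 2) * k ≤ (lam β + ε / 2) * n := by gcongr
  rw [div_lt_iff₀ hn0] at hsmall
  rw [div_le_iff₀ hn0]
  linarith [hC k]

lemma frequently_le_neg_logb_len_In_point_div (hβ : 1 < β) (hx : x ∈ Ioc (0:ℝ) 1)
    (hN : N ≤ S.L 0) (hK : (β⁻¹)^(S.L 0 - N) ≤ (Tbeta β)^[N] x)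
    (hM : ∀ i, (i+1) * S.L i < S.M i) (ht : ∀ i, (lam β - 1/(i+1)) * S.M i ≤ tseq β (S.M i))
    {ε : ℝ} (hε : 0 < ε) :
    ∃ᶠ n : ℕ in atTop, 1 + lam β - ε ≤ -Real.logb β (len (In β (S.point x N) n)) / n := by
  obtain ⟨i₀, hi₀⟩ := eventually_atTop.1 <| (tendsto_order.1 <|
    (tendsto_const_div_atTop_nhds_zero_nat (lam β + 1)).comp (tendsto_add_atTop_nat 2)).2 ε hε
  refine frequently_atTop.2 fun n₀ => ⟨S.L (max n₀ i₀) + S.M (max n₀ i₀), ?_, ?_⟩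
  · linarith [S.L_zero_add_le (max n₀ i₀), le_max_left n₀ i₀]
  set i := max n₀ i₀
  have hlog := le_neg_logb_len_In hβ (S.point_mem_In hβ hx hN hK).1 (p := S.L i) (k := S.M i)
    fun j hj => by rw [S.eps_point hβ hx hN hK, S.digits_L_add hN hj]
  have hratio := sub_div_le_div_add_of_mul_lt (hM i) (ht i)
  have hsmall : (lam β + 1) / (i + 2) < ε := by exact_mod_cast hi₀ i (le_max_right n₀ i₀)
  have hn0 : (0:ℝ) < S.L i + S.M i := by have := S.M_pos i; positivity
  push_cast at hlog ⊢
  rw [le_div_iff₀ hn0]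
  rw [le_div_iff₀ hn0] at hratio
  nlinarith

end BlockSchedule

lemma exists_blockSchedule {β : ℝ} (hβ : 1 < β) (L₀ : ℕ) :
    ∃ S : BlockSchedule β, S.L 0 = L₀ ∧ (∀ i, (i+1) * S.L i < S.M i) ∧
      ∀ i, (lam β - 1/(i+1)) * S.M i ≤ tseq β (S.M i) := by
  choose m hm_ge hm_tseq using fun i P : ℕ =>
    exists_tseq_ge (β := β) ((i+1) * P + 1) (ε := 1/(i+1)) (by positivity)
  obtain ⟨gap, hgap⟩ := pow_unbounded_of_one_lt (1 - β⁻¹)⁻¹ hβ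
  let L : ℕ → ℕ := fun n => Nat.rec L₀ (fun i Li => Li + m i Li + tseq β (m i Li) + 1 + gap) n
  exact ⟨⟨L, fun i => m i (L i), gap, fun i => by have := hm_ge i (L i); omega, fun _ => rfl,
    hgap.le⟩, rfl, fun i => hm_ge i (L i), fun i => hm_tseq i (L i)⟩

lemma exists_mem_In_upperD_eq {β : ℝ} (hβ : 1 < β) (hlam : 0 < lam β) {x : ℝ}
    (hx : x ∈ Ioc (0:ℝ) 1) (N : ℕ) : ∃ y ∈ In β x N, upperD β y = 1 + lam β := by
  obtain ⟨K, hK⟩ := exists_pow_lt_of_lt_one (iterate_Tbeta_mem_Ioc β hx N).1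
    (inv_lt_one_of_one_lt₀ hβ)
  obtain ⟨S, hL0, hM, ht⟩ := exists_blockSchedule hβ (N + K)
  have hN : N ≤ S.L 0 := hL0 ▸ Nat.le_add_right N K
  have hK' : (β⁻¹)^(S.L 0 - N) ≤ (Tbeta β)^[N] x := by
    rw [hL0, Nat.add_sub_cancel_left]; exact hK.le
  refine ⟨S.point x N, S.point_mem_In hβ hx hN hK', ?_⟩
  exact limsup_eq_of_eventually_le_of_frequently_ge
    (fun ε hε => S.eventually_neg_logb_len_In_point_div_le hβ hlam hx hN hK' hε)
    (fun ε hε => S.frequently_le_neg_logb_len_In_point_div hβ hx hN hK' hM ht hε)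

/-- If `λ(β) > 0`, the extremely irregular set
`E = {x ∈ (0,1] : limsup (−log_β |I_n(x)|)/n = 1 + λ(β)}` is dense in `[0,1]`:
its closure equals `[0,1]`. -/
theorem extremely_irregular_dense (β : ℝ) (hβ : 1 < β) (hlam : 0 < lam β) :
    closure {x ∈ Ioc (0:ℝ) 1 | upperD β x = 1 + lam β} = Icc (0:ℝ) 1 := by
  refine Subset.antisymm (closure_minimal (fun x hx => Ioc_subset_Icc_self hx.1) isClosed_Icc) ?_
  rw [← closure_Ioc zero_ne_one]
  refine closure_minimal (fun x hx => Metric.mem_closure_iff.2 fun δ hδ => ?_) isClosed_closure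
  obtain ⟨N, hN⟩ := exists_pow_lt_of_lt_one hδ (inv_lt_one_of_one_lt₀ hβ)
  obtain ⟨y, hy, hyD⟩ := exists_mem_In_upperD_eq hβ hlam hx N
  exact ⟨y, ⟨hy.1, hyD⟩, (abs_sub_le_of_mem_In (zero_lt_one.trans hβ) hx hy).trans_lt hN⟩
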